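/- arXiv:1903.06007 — 3 statements merged into one kernel-verified Lean document; each statement's English description precedes it below -/
import Mathlib

section
/- The optimization functional f ↦ f^T D_γ^{-1} L^γ D_γ^{-1} f + μ (f-y)^T D_γ^{-1} (f-y), with μ > 0, is minimized at f = μ (L^γ D_γ^{-1} + μ I)^{-1} y, and in particular the matrix L^γ D_γ^{-1} + μ I is invertible. -/
/-!
With `P = D_γ⁻¹` positive semidefinite, the objective is a quadratic with positive semidefinite
Hessian `2 (P L P + μ P)`, so every stationary point is a global minimizer. Its gradient at `x` is
`2 P ((L P + μ) x - μ y)`, which vanishes at `x = μ (L P + μ)⁻¹ y` as soon as `L P + μ` is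
invertible.
-/

open Matrix

namespace Matrix

variable {n : Type*}

theorem PosSemidef.isSymm {A : Matrix n n ℝ} (hA : A.PosSemidef) : A.IsSymm :=
  isHermitian_iff_isSymm.mp hA.isHermitian

variable [Fintype n]

theorem IsSymm.dotProduct_mulVec_comm {R : Type*} [CommSemiring R] {A : Matrix n n R}
    (hA : A.IsSymm) (x y : n → R) : x ⬝ᵥ A *ᵥ y = y ⬝ᵥ A *ᵥ x := by
  rw [dotProduct_mulVec, ← mulVec_transpose, hA.eq, dotProduct_comm]

theorem IsSymm.add_dotProduct_mulVec_add {R : Type*} [CommRing R] {A : Matrix n n R}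
    (hA : A.IsSymm) (x h : n → R) :
    (x + h) ⬝ᵥ A *ᵥ (x + h) = x ⬝ᵥ A *ᵥ x + 2 * (h ⬝ᵥ A *ᵥ x) + h ⬝ᵥ A *ᵥ h := by
  rw [mulVec_add, add_dotProduct, dotProduct_add, dotProduct_add, hA.dotProduct_mulVec_comm x h]
  ring

/-- A kernel vector `v` of `L P + μ` gives `(P v)ᵀ L (P v) = -μ vᵀ P v`, so both sides vanish;
then `P v = 0`, hence `μ v = 0`. -/
theorem PosSemidef.isUnit_det_mul_add_smul_one [DecidableEq n] {L P : Matrix n n ℝ}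
    (hL : L.PosSemidef) (hP : P.PosSemidef) {μ : ℝ} (hμ : 0 < μ) :
    IsUnit (L * P + μ • 1).det := by
  rw [isUnit_iff_ne_zero, Ne, ← exists_mulVec_eq_zero_iff]
  rintro ⟨v, hv0, hv⟩
  rw [add_mulVec, ← mulVec_mulVec, smul_mulVec, one_mulVec] at hv
  have hLPv : L *ᵥ P *ᵥ v = -(μ • v) := eq_neg_of_add_eq_zero_left hv
  have hPv : P *ᵥ v = 0 := by
    have hLnonneg := hL.dotProduct_mulVec_nonneg (P *ᵥ v)
    have hPnonneg := hP.dotProduct_mulVec_nonneg v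
    rw [star_trivial] at hLnonneg hPnonneg
    rw [hLPv, dotProduct_neg, dotProduct_smul, smul_eq_mul, dotProduct_comm] at hLnonneg
    rw [← hP.dotProduct_mulVec_zero_iff, star_trivial]
    nlinarith
  rw [hPv, mulVec_zero, zero_eq_neg, smul_eq_zero] at hLPv
  exact hv0 (hLPv.resolve_left hμ.ne')

theorem PosSemidef.mul_mul_same_of_isSymm {L P : Matrix n n ℝ} (hL : L.PosSemidef)
    (hP : P.IsSymm) : (P * L * P).PosSemidef := by
  simpa [hP.eq] using hL.conjTranspose_mul_mul_same P

end Matrix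

section Objective

variable {n : Type*} [Fintype n] [DecidableEq n]

def pagerankObjective (L P : Matrix n n ℝ) (μ : ℝ) (y g : n → ℝ) : ℝ :=
  g ⬝ᵥ P *ᵥ L *ᵥ P *ᵥ g + μ * ((g - y) ⬝ᵥ P *ᵥ (g - y))

theorem pagerankObjective_add {L P : Matrix n n ℝ} (hL : L.IsSymm) (hP : P.IsSymm) (μ : ℝ)
    (y x h : n → ℝ) :
    pagerankObjective L P μ y (x + h) = pagerankObjective L P μ y x
      + 2 * (h ⬝ᵥ P *ᵥ ((L * P + μ • 1) *ᵥ x - μ • y))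
      + (h ⬝ᵥ (P * L * P) *ᵥ h + μ * (h ⬝ᵥ P *ᵥ h)) := by
  have hPLP : (P * L * P).IsSymm := by
    simp only [IsSymm, transpose_mul, hP.eq, hL.eq, Matrix.mul_assoc]
  have hquad (g : n → ℝ) : g ⬝ᵥ P *ᵥ L *ᵥ P *ᵥ g = g ⬝ᵥ (P * L * P) *ᵥ g := by
    rw [mulVec_mulVec, mulVec_mulVec, Matrix.mul_assoc]
  have hgrad : P *ᵥ ((L * P + μ • 1) *ᵥ x - μ • y) = (P * L * P) *ᵥ x + μ • P *ᵥ (x - y) := by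
    simp only [add_mulVec, smul_mulVec, one_mulVec, mulVec_sub, mulVec_add, mulVec_smul,
      ← mulVec_mulVec]
    module
  rw [pagerankObjective, pagerankObjective, hquad, hquad, add_sub_right_comm,
    hPLP.add_dotProduct_mulVec_add, hP.add_dotProduct_mulVec_add, hgrad, dotProduct_add,
    dotProduct_smul, smul_eq_mul]
  ring

theorem pagerankObjective_le_of_mulVec_eq {L P : Matrix n n ℝ} (hL : L.PosSemidef)
    (hP : P.PosSemidef) {μ : ℝ} (hμ : 0 ≤ μ) {y x : n → ℝ}
    (hx : (L * P + μ • 1) *ᵥ x = μ • y) (g : n → ℝ) :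
    pagerankObjective L P μ y x ≤ pagerankObjective L P μ y g := by
  obtain ⟨h, rfl⟩ : ∃ h, g = x + h := ⟨g - x, by abel⟩
  rw [pagerankObjective_add hL.isSymm hP.isSymm, hx, sub_self, mulVec_zero, dotProduct_zero,
    mul_zero, add_zero, le_add_iff_nonneg_right]
  have hPLP := (hL.mul_mul_same_of_isSymm hP.isSymm).dotProduct_mulVec_nonneg h
  have hPh := hP.dotProduct_mulVec_nonneg h
  rw [star_trivial] at hPLP hPh
  positivity

end Objective

theorem lgamma_pagerank_minimizer_general {N : ℕ} (Lγ : Matrix (Fin N) (Fin N) ℝ)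
    (hpsd : Lγ.PosSemidef)
    (μ : ℝ) (hμ : 0 < μ) (y : Fin N → ℝ)
    (Dinv : Matrix (Fin N) (Fin N) ℝ)
    (hDinv : Dinv = (Matrix.diagonal fun u => Lγ u u)⁻¹)
    (F : (Fin N → ℝ) → ℝ)
    (hF : ∀ g, F g = g ⬝ᵥ (Dinv *ᵥ (Lγ *ᵥ (Dinv *ᵥ g))) + μ * ((g - y) ⬝ᵥ (Dinv *ᵥ (g - y)))) :
    IsUnit (Lγ * Dinv + μ • (1 : Matrix (Fin N) (Fin N) ℝ)).det ∧
    ∀ f : Fin N → ℝ,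
      F (μ • ((Lγ * Dinv + μ • (1 : Matrix (Fin N) (Fin N) ℝ))⁻¹ *ᵥ y)) ≤ F f := by
  have hDinv_psd : Dinv.PosSemidef :=
    hDinv ▸ (posSemidef_diagonal_iff.mpr fun _ => hpsd.diag_nonneg).inv
  have hM := hpsd.isUnit_det_mul_add_smul_one hDinv_psd hμ
  refine ⟨hM, fun f => ?_⟩
  rw [show F = pagerankObjective Lγ Dinv μ y from funext hF]
  apply pagerankObjective_le_of_mulVec_eq hpsd hDinv_psd hμ.le
  rw [mulVec_smul, mulVec_mulVec, mul_nonsing_inv _ hM, one_mulVec]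

/-- The functional `f ↦ fᵀ D_γ⁻¹ L^γ D_γ⁻¹ f + μ (f-y)ᵀ D_γ⁻¹ (f-y)` is minimized at
`f = μ (L^γ D_γ⁻¹ + μ I)⁻¹ y`, and the matrix `L^γ D_γ⁻¹ + μ I` is invertible. -/
theorem lgamma_pagerank_minimizer {N : ℕ} (Lγ : Matrix (Fin N) (Fin N) ℝ)
    (hpsd : Lγ.PosSemidef) (hdpos : ∀ u, 0 < Lγ u u)
    (μ : ℝ) (hμ : 0 < μ) (y : Fin N → ℝ)
    (Dinv : Matrix (Fin N) (Fin N) ℝ)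
    (hDinv : Dinv = (Matrix.diagonal fun u => Lγ u u)⁻¹)
    (F : (Fin N → ℝ) → ℝ)
    (hF : ∀ g, F g = g ⬝ᵥ (Dinv *ᵥ (Lγ *ᵥ (Dinv *ᵥ g))) + μ * ((g - y) ⬝ᵥ (Dinv *ᵥ (g - y)))) :
    IsUnit (Lγ * Dinv + μ • (1 : Matrix (Fin N) (Fin N) ℝ)).det ∧
    ∀ f : Fin N → ℝ,
      F (μ • ((Lγ * Dinv + μ • (1 : Matrix (Fin N) (Fin N) ℝ))⁻¹ *ᵥ y)) ≤ F f :=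
  lgamma_pagerank_minimizer_general Lγ hpsd μ hμ y Dinv hDinv F hF
end

section
/- Let S be a vertex set with vol_γ(S) ≤ vol_γ(G)/2, and let y = D_γ 𝟙_S / vol_γ(S). Then the L^γ-PageRank vector f = μ(L^γ D_γ^{-1} + μI)^{-1} y satisfies 𝟙_{S^c}^T f ≤ h_S^{(γ)}/μ, where h_S^{(γ)} = 𝟙_S^T L^γ 𝟙_S / vol_γ(S). -/
open Matrix Finset

/-!
With `D = diag L^γ` and the positive definite `P = L^γ + μ D`, one has
`(L^γ D⁻¹ + μ I)⁻¹ = D P⁻¹`, so `f = μ D g / vol_γ(S)` where `P g = D 𝟙_S`. Pairing `P g = D 𝟙_S`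
with `𝟙_{Sᶜ}` and using `L^γ 𝟙 = 0` gives the exact escape mass `μ 𝟙_{Sᶜ}ᵀ D g = (L^γ 𝟙_S)ᵀ g`.
Writing `μ D 𝟙_S = P 𝟙_S - L^γ 𝟙_S` turns `μ (L^γ 𝟙_S)ᵀ g` into
`𝟙_Sᵀ L^γ 𝟙_S - (L^γ 𝟙_S)ᵀ P⁻¹ (L^γ 𝟙_S)`, and the last term is nonnegative.
-/

section

variable {n : Type*} [Fintype n] [DecidableEq n]

def indicatorVector (S : Finset n) : n → ℝ := fun u => if u ∈ S then 1 else 0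

lemma indicatorVector_dotProduct (S : Finset n) (v : n → ℝ) :
    indicatorVector S ⬝ᵥ v = ∑ u ∈ S, v u := by
  simp [indicatorVector, dotProduct]

lemma indicatorVector_compl (S : Finset n) : indicatorVector Sᶜ = 1 - indicatorVector S := by
  ext u; by_cases hu : u ∈ S <;> simp [indicatorVector, hu]

lemma indicatorVector_compl_dotProduct_diagonal_mulVec (S : Finset n) (d : n → ℝ) :
    indicatorVector Sᶜ ⬝ᵥ (diagonal d *ᵥ indicatorVector S) = 0 := by
  refine Finset.sum_eq_zero fun u _ => ?_
  by_cases hu : u ∈ S <;> simp [indicatorVector, mulVec_diagonal, hu]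

lemma mul_inv_add_smul_one_inv {D : Matrix n n ℝ} (hD : IsUnit D.det) (L : Matrix n n ℝ)
    (μ : ℝ) : (L * D⁻¹ + μ • 1)⁻¹ = D * (L + μ • D)⁻¹ := by
  rw [← mul_nonsing_inv D hD, ← smul_mul, ← add_mul, Matrix.mul_inv_rev,
    nonsing_inv_nonsing_inv D hD]

lemma mulVec_dotProduct_inv_mulVec_le {L B : Matrix n n ℝ} (hP : (L + B).PosDef)
    (v : n → ℝ) : (L *ᵥ v) ⬝ᵥ ((L + B)⁻¹ *ᵥ (B *ᵥ v)) ≤ v ⬝ᵥ (L *ᵥ v) := by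
  have hB : B *ᵥ v = (L + B) *ᵥ v - L *ᵥ v := by rw [add_mulVec]; abel
  have hcancel : (L + B)⁻¹ *ᵥ ((L + B) *ᵥ v) = v := by
    rw [mulVec_mulVec, nonsing_inv_mul _ ((isUnit_iff_isUnit_det _).mp hP.isUnit), one_mulVec]
  have hnonneg := hP.inv.posSemidef.dotProduct_mulVec_nonneg (L *ᵥ v)
  rw [star_trivial] at hnonneg
  rw [hB, mulVec_sub, hcancel, dotProduct_sub, dotProduct_comm (L *ᵥ v) v]
  linarith

lemma sum_compl_smul_diagonal_mulVec {L : Matrix n n ℝ} (hL : L.IsSymm) (hone : L *ᵥ 1 = 0)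
    {d : n → ℝ} {μ : ℝ} {S : Finset n} {g : n → ℝ}
    (hg : (L + μ • diagonal d) *ᵥ g = diagonal d *ᵥ indicatorVector S) :
    ∑ v ∈ Sᶜ, (μ • (diagonal d *ᵥ g)) v = (L *ᵥ indicatorVector S) ⬝ᵥ g := by
  have hLcompl : L *ᵥ indicatorVector Sᶜ = -(L *ᵥ indicatorVector S) := by
    rw [indicatorVector_compl, mulVec_sub, hone, zero_sub]
  have hsymm : indicatorVector Sᶜ ⬝ᵥ (L *ᵥ g) = -(L *ᵥ indicatorVector S) ⬝ᵥ g := by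
    rw [dotProduct_mulVec, ← mulVec_transpose, hL.eq, hLcompl]
  have hsplit := congrArg (indicatorVector Sᶜ ⬝ᵥ ·) hg
  simp only [add_mulVec, smul_mulVec, dotProduct_add, hsymm, neg_dotProduct,
    indicatorVector_compl_dotProduct_diagonal_mulVec] at hsplit
  rw [← indicatorVector_dotProduct]
  linarith

end

theorem lgamma_pagerank_escape_bound_general {N : ℕ} (Lγ : Matrix (Fin N) (Fin N) ℝ)
    (hpsd : Lγ.PosSemidef) (hdpos : ∀ u, 0 < Lγ u u)
    (hone : Lγ *ᵥ (fun _ => (1 : ℝ)) = 0)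
    (μ : ℝ) (hμ : 0 < μ)
    (S : Finset (Fin N))
    (Dinv : Matrix (Fin N) (Fin N) ℝ)
    (hDinv : Dinv = (Matrix.diagonal fun u => Lγ u u)⁻¹)
    (y : Fin N → ℝ)
    (hy : y = fun u => (if u ∈ S then Lγ u u else 0) / ∑ w ∈ S, Lγ w w)
    (f : Fin N → ℝ)
    (hf : f = μ • ((Lγ * Dinv + μ • (1 : Matrix (Fin N) (Fin N) ℝ))⁻¹ *ᵥ y)) :
    ∑ v ∈ Sᶜ, f v ≤
      ((fun u => if u ∈ S then (1 : ℝ) else 0) ⬝ᵥ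
          (Lγ *ᵥ fun u => if u ∈ S then (1 : ℝ) else 0)) / (∑ u ∈ S, Lγ u u) / μ := by
  set d : Fin N → ℝ := fun u => Lγ u u
  set χ := indicatorVector S
  set c := (∑ u ∈ S, Lγ u u)⁻¹
  have hDpos : (diagonal d).PosDef := PosDef.diagonal hdpos
  have hP : (Lγ + μ • diagonal d).PosDef := PosDef.posSemidef_add hpsd (hDpos.smul hμ)
  set g := (Lγ + μ • diagonal d)⁻¹ *ᵥ (diagonal d *ᵥ χ)
  have hPg : (Lγ + μ • diagonal d) *ᵥ g = diagonal d *ᵥ χ := by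
    rw [mulVec_mulVec, mul_nonsing_inv _ ((isUnit_iff_isUnit_det _).mp hP.isUnit), one_mulVec]
  have hy' : y = c • (diagonal d *ᵥ χ) := by
    ext u
    by_cases hu : u ∈ S <;>
      simp [hy, χ, indicatorVector, mulVec_diagonal, hu, c, d, div_eq_inv_mul]
  have hfg : f = c • μ • (diagonal d *ᵥ g) := by
    rw [hf, hDinv, mul_inv_add_smul_one_inv ((isUnit_iff_isUnit_det _).mp hDpos.isUnit), hy',
      mulVec_smul, ← mulVec_mulVec, smul_comm]
  have hescape :=
    sum_compl_smul_diagonal_mulVec (isHermitian_iff_isSymm.mp hpsd.isHermitian) hone hPg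
  have hbound : μ * ((Lγ *ᵥ χ) ⬝ᵥ g) ≤ χ ⬝ᵥ (Lγ *ᵥ χ) := by
    simpa only [smul_mulVec, mulVec_smul, dotProduct_smul, smul_eq_mul]
      using mulVec_dotProduct_inv_mulVec_le hP χ
  change _ ≤ χ ⬝ᵥ (Lγ *ᵥ χ) / _ / μ
  calc ∑ v ∈ Sᶜ, f v = c * ((Lγ *ᵥ χ) ⬝ᵥ g) := by
        rw [hfg, ← hescape, Finset.mul_sum]
        rfl
    _ ≤ c * (χ ⬝ᵥ (Lγ *ᵥ χ) / μ) := by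
        gcongr
        · exact inv_nonneg.mpr (sum_nonneg fun u _ => (hdpos u).le)
        · rwa [le_div_iff₀' hμ]
    _ = χ ⬝ᵥ (Lγ *ᵥ χ) / (∑ u ∈ S, Lγ u u) / μ := by ring

/-- If `vol_γ(S) ≤ vol_γ(G)/2` and `y = D_γ 𝟙_S / vol_γ(S)`, then the `L^γ`-PageRank
vector `f = μ (L^γ D_γ⁻¹ + μ I)⁻¹ y` satisfies `𝟙_{Sᶜ}ᵀ f ≤ h_S^{(γ)} / μ`, where
`h_S^{(γ)} = 𝟙_Sᵀ L^γ 𝟙_S / vol_γ(S)`. -/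
theorem lgamma_pagerank_escape_bound {N : ℕ} (Lγ : Matrix (Fin N) (Fin N) ℝ)
    (hpsd : Lγ.PosSemidef) (hdpos : ∀ u, 0 < Lγ u u)
    (hone : Lγ *ᵥ (fun _ => (1 : ℝ)) = 0)
    (μ : ℝ) (hμ : 0 < μ)
    (S : Finset (Fin N)) (hS : S.Nonempty)
    (hvol : ∑ u ∈ S, Lγ u u ≤ (∑ u, Lγ u u) / 2)
    (Dinv : Matrix (Fin N) (Fin N) ℝ)
    (hDinv : Dinv = (Matrix.diagonal fun u => Lγ u u)⁻¹)
    (y : Fin N → ℝ)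
    (hy : y = fun u => (if u ∈ S then Lγ u u else 0) / ∑ w ∈ S, Lγ w w)
    (f : Fin N → ℝ)
    (hf : f = μ • ((Lγ * Dinv + μ • (1 : Matrix (Fin N) (Fin N) ℝ))⁻¹ *ᵥ y)) :
    ∑ v ∈ Sᶜ, f v ≤
      ((fun u => if u ∈ S then (1 : ℝ) else 0) ⬝ᵥ
          (Lγ *ᵥ fun u => if u ∈ S then (1 : ℝ) else 0)) / (∑ u ∈ S, Lγ u u) / μ :=
  lgamma_pagerank_escape_bound_general Lγ hpsd hdpos hone μ hμ S Dinv hDinv y hy f hf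
end

section
/- With q sorted in descending order and S_j the top-j vertices, the quantity μ(y(S_j) - f(S_j)) is bounded below by (q_j - q_{j+1})(2A_out(S_j) + D_out(S_j)) - (q_1 - q_N)(2D_out(S_j) + A_out(S_j)), where A_out(S_j) and D_out(S_j) are the total absolute weights of positive and negative edges of W_γ crossing between S_j and S_j^c. -/
/-!
Since `L^γ` is symmetric with zero row sums, `μ (y(S) - f(S)) = ∑_{u ∈ S} (L^γ q)_u` collapses to the
cut sum `∑_{u ∈ S, v ∉ S} W_{uv} (q_u - q_v)`: the contributions of pairs inside `S` cancel. Every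
difference `q_u - q_v` across the cut lies between the sweep gap `q_j - q_{j+1}` and the spread
`q_1 - q_N`, so positive weights contribute at least the gap and negative weights at most the spread.
-/

open Matrix Finset

namespace Matrix

variable {n R : Type*} [CommRing R] {L : Matrix n n R}

theorem mulVec_eq_sum_mul_sub_of_mulVec_one_eq_zero [Fintype n] (hrow : L *ᵥ 1 = 0) (q : n → R) (u : n) :
    (L *ᵥ q) u = ∑ v, L u v * (q v - q u) := by
  have hu : ∑ v, L u v = 0 := by simpa [mulVec, dotProduct] using congrFun hrow u
  simp only [mul_sub, sum_sub_distrib, ← sum_mul, hu, zero_mul, sub_zero, mulVec, dotProduct]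

theorem IsSymm.sum_sum_mul_sub_eq_zero (hL : L.IsSymm) (S : Finset n) (q : n → R) :
    ∑ u ∈ S, ∑ v ∈ S, L u v * (q v - q u) = 0 := by
  simp only [mul_sub, sum_sub_distrib, sub_eq_zero]
  rw [sum_comm]
  exact sum_congr rfl fun u _ => sum_congr rfl fun v _ => by rw [hL.apply u v]

theorem IsSymm.sum_mulVec_eq_sum_cut [Fintype n] [DecidableEq n] (hL : L.IsSymm) (hrow : L *ᵥ 1 = 0)
    (S : Finset n) (q : n → R) :
    ∑ u ∈ S, (L *ᵥ q) u = ∑ u ∈ S, ∑ v ∈ Sᶜ, -L u v * (q u - q v) := by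
  simp_rw [mulVec_eq_sum_mul_sub_of_mulVec_one_eq_zero hrow, ← sum_add_sum_compl S,
    sum_add_distrib, hL.sum_sum_mul_sub_eq_zero, zero_add]
  exact sum_congr rfl fun u _ => sum_congr rfl fun v _ => by ring

end Matrix

theorem mul_max_neg_zero_sub_mul_max_zero_le {a b d : ℝ} (l : ℝ) (had : a ≤ d) (hdb : d ≤ b) :
    a * max (-l) 0 - b * max l 0 ≤ -l * d := by
  rcases le_total l 0 with hl | hl
  · rw [max_eq_left (neg_nonneg.2 hl), max_eq_right hl]
    nlinarith
  · rw [max_eq_right (neg_nonpos.2 hl), max_eq_left hl]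
    nlinarith

theorem mul_sum_max_neg_zero_sub_mul_sum_max_zero_le {ι : Type*} (S T : Finset ι)
    (L d : ι → ι → ℝ) {a b : ℝ} (hd : ∀ u ∈ S, ∀ v ∈ T, a ≤ d u v ∧ d u v ≤ b) :
    a * ∑ u ∈ S, ∑ v ∈ T, max (-L u v) 0 - b * ∑ u ∈ S, ∑ v ∈ T, max (L u v) 0 ≤
      ∑ u ∈ S, ∑ v ∈ T, -L u v * d u v := by
  simp only [mul_sum, ← sum_sub_distrib]
  exact sum_le_sum fun u hu => sum_le_sum fun v hv =>
    mul_max_neg_zero_sub_mul_max_zero_le _ (hd u hu v hv).1 (hd u hu v hv).2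

namespace Antitone

variable {β : Type*} [AddCommGroup β] [PartialOrder β] [IsOrderedAddMonoid β] {N : ℕ}
  {g : Fin N → β}

theorem sub_le_sub_of_lt_of_le (hg : Antitone g) {j : ℕ} (hj : j < N) {i k : Fin N}
    (hi : (i : ℕ) < j) (hk : j ≤ k) : g ⟨j - 1, by omega⟩ - g ⟨j, hj⟩ ≤ g i - g k :=
  sub_le_sub (hg (Fin.mk_le_mk.2 (by omega))) (hg (Fin.mk_le_mk.2 hk))

theorem sub_le_sub_zero_last (hg : Antitone g) (i k : Fin N) :
    g i - g k ≤ g ⟨0, i.pos⟩ - g ⟨N - 1, Nat.sub_one_lt_of_lt i.isLt⟩ :=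
  sub_le_sub (hg (Fin.mk_le_mk.2 (Nat.zero_le _))) (hg (Fin.mk_le_mk.2 (by omega)))

end Antitone

/-- With `q` sorted in descending order and `S_j` the top-`j` vertices,
`μ (y(S_j) - f(S_j)) ≥ (q_j - q_{j+1})(2 A_out(S_j) + D_out(S_j)) - (q_1 - q_N)(2 D_out(S_j) + A_out(S_j))`,
where `A_out` and `D_out` are the total absolute weights of positive and negative edges of
`W_γ = -L^γ` (off-diagonal) crossing between `S_j` and `S_jᶜ`. -/
theorem lgamma_pagerank_sweep_lower_bound {N : ℕ} (Lγ : Matrix (Fin N) (Fin N) ℝ)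
    (hsym : Lγᵀ = Lγ)
    (hone : Lγ *ᵥ (fun _ => (1 : ℝ)) = 0)
    (μ : ℝ) (y f q : Fin N → ℝ)
    (hf : Lγ *ᵥ q = μ • (y - f))
    (σ : Equiv.Perm (Fin N))
    (hsort : ∀ i j : Fin N, i ≤ j → q (σ j) ≤ q (σ i))
    (j : ℕ) (hj : j < N)
    (Sj : Finset (Fin N))
    (hSj : Sj = (Finset.univ.filter fun i : Fin N => (i : ℕ) < j).image σ) :
    μ * ((∑ u ∈ Sj, y u) - ∑ u ∈ Sj, f u) ≥
      (q (σ ⟨j - 1, by omega⟩) - q (σ ⟨j, hj⟩)) *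
          (2 * (∑ u ∈ Sj, ∑ v ∈ Sjᶜ, max (-(Lγ u v)) 0) +
            ∑ u ∈ Sj, ∑ v ∈ Sjᶜ, max (Lγ u v) 0) -
        (q (σ ⟨0, by omega⟩) - q (σ ⟨N - 1, by omega⟩)) *
          (2 * (∑ u ∈ Sj, ∑ v ∈ Sjᶜ, max (Lγ u v) 0) +
            ∑ u ∈ Sj, ∑ v ∈ Sjᶜ, max (-(Lγ u v)) 0) := by
  have hanti : Antitone (q ∘ σ) := fun i k h => hsort i k h
  have hmem : ∀ u, u ∈ Sj ↔ ((σ.symm u : Fin N) : ℕ) < j := by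
    simp [hSj, ← σ.eq_symm_apply]
  have hcut : ∀ u ∈ Sj, ∀ v ∈ Sjᶜ, q (σ ⟨j - 1, by omega⟩) - q (σ ⟨j, hj⟩) ≤ q u - q v ∧
      q u - q v ≤ q (σ ⟨0, by omega⟩) - q (σ ⟨N - 1, by omega⟩) := by
    intro u hu v hv
    rw [← σ.apply_symm_apply u, ← σ.apply_symm_apply v]
    exact ⟨hanti.sub_le_sub_of_lt_of_le hj ((hmem u).1 hu)
        (not_lt.1 fun h => mem_compl.1 hv ((hmem v).2 h)),
      hanti.sub_le_sub_zero_last _ _⟩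
  have hgap : q (σ ⟨j - 1, by omega⟩) - q (σ ⟨j, hj⟩) ≤
      q (σ ⟨0, by omega⟩) - q (σ ⟨N - 1, by omega⟩) := hanti.sub_le_sub_zero_last _ _
  have hA : 0 ≤ ∑ u ∈ Sj, ∑ v ∈ Sjᶜ, max (-(Lγ u v)) 0 :=
    sum_nonneg fun _ _ => sum_nonneg fun _ _ => le_max_right _ _
  have hD : 0 ≤ ∑ u ∈ Sj, ∑ v ∈ Sjᶜ, max (Lγ u v) 0 :=
    sum_nonneg fun _ _ => sum_nonneg fun _ _ => le_max_right _ _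
  have hflow : μ * ((∑ u ∈ Sj, y u) - ∑ u ∈ Sj, f u) =
      ∑ u ∈ Sj, ∑ v ∈ Sjᶜ, -Lγ u v * (q u - q v) := by
    rw [← Matrix.IsSymm.sum_mulVec_eq_sum_cut hsym hone, hf, mul_sub, mul_sum, mul_sum,
      ← sum_sub_distrib]
    simp [mul_sub]
  rw [hflow, ge_iff_le]
  refine le_trans ?_ (mul_sum_max_neg_zero_sub_mul_sum_max_zero_le _ _ _ _ hcut)
  linarith [mul_nonneg (sub_nonneg.2 hgap) (add_nonneg hA hD)]
end
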